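/- Higher sensitivity yields stochastic dominance: let r₁ and r₂ be nonnegative integrable functions on [0, y_t] with r₁(u) ≥ r₂(u) for all u, and let F_i(y) = exp(−∫_y^{y_t} r_i(u) du) be the corresponding estimator CDFs. Then F₁(y) ≤ F₂(y) for all y ∈ [0, y_t]; consequently, for every threshold y* ∈ [0, y_t], the detection likelihood under r₁ is at least that under r₂: 1 − F₁(y*) ≥ 1 − F₂(y*), and the expected estimator under r₁ is at least that under r₂, so the bias magnitude is smaller under r₁. -/

import Mathlib

/-!
Raising the rate lowers `exp (-∫ r)`, so the CDFs are ordered. The tail-probability (layer-cake)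
formula `E[Y] = ∫₀^{y_t} P(Y > t) dt = ∫₀^{y_t} (1 - F(t)) dt` then turns the pointwise order of
the CDFs into the order of the means.
-/

open MeasureTheory intervalIntegral Set

lemma exp_neg_integral_le_exp_neg_integral {r₁ r₂ : ℝ → ℝ} {a b y : ℝ} (hy : y ∈ Icc a b)
    (hint₁ : IntervalIntegrable r₁ volume a b) (hint₂ : IntervalIntegrable r₂ volume a b)
    (hle : ∀ u ∈ Icc a b, r₂ u ≤ r₁ u) :
    Real.exp (-∫ u in y..b, r₁ u) ≤ Real.exp (-∫ u in y..b, r₂ u) := by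
  have hsub : uIcc y b ⊆ uIcc a b := by
    rw [uIcc_of_le hy.2, uIcc_of_le (hy.1.trans hy.2)]
    exact Icc_subset_Icc_left hy.1
  rw [Real.exp_le_exp, neg_le_neg_iff]
  exact integral_mono_on hy.2 (hint₂.mono_set hsub) (hint₁.mono_set hsub)
    fun u hu => hle u (Icc_subset_Icc_left hy.1 hu)

namespace MeasureTheory

variable {Ω : Type*} [MeasurableSpace Ω] {μ : Measure Ω} {X : Ω → ℝ}

lemma Integrable.integral_eq_integral_Ioc_meas_lt {M : ℝ} (hX : Integrable X μ)
    (hX_nn : 0 ≤ᵐ[μ] X) (hX_bdd : X ≤ᵐ[μ] fun _ => M) :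
    ∫ ω, X ω ∂μ = ∫ t in Ioc 0 M, μ.real {ω | t < X ω} := by
  rw [hX.integral_eq_integral_Ioc_meas_le hX_nn hX_bdd]
  refine integral_congr_ae ?_
  filter_upwards [meas_le_ae_eq_meas_lt μ (volume.restrict (Ioc 0 M)) X] with t ht
  exact congrArg ENNReal.toReal ht

lemma antitone_measureReal_lt [IsFiniteMeasure μ] : Antitone fun t => μ.real {ω | t < X ω} :=
  fun _ _ hst => measureReal_mono fun _ hω => lt_of_le_of_lt hst hω

lemma integrableOn_measureReal_lt [IsFiniteMeasure μ] (a b : ℝ) :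
    IntegrableOn (fun t => μ.real {ω | t < X ω}) (Ioc a b) :=
  ((Antitone.locallyIntegrable antitone_measureReal_lt).integrableOn_isCompact
    isCompact_Icc).mono_set Ioc_subset_Icc_self

lemma probReal_lt_eq_one_sub [IsProbabilityMeasure μ] (hX : AEMeasurable X μ) (t : ℝ) :
    μ.real {ω | t < X ω} = 1 - μ.real {ω | X ω ≤ t} := by
  have hcompl : {ω | t < X ω} = {ω | X ω ≤ t}ᶜ := by
    ext ω
    simp
  rw [hcompl]
  exact probReal_compl_eq_one_sub₀ (hX.nullMeasurableSet_preimage measurableSet_Iic)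

end MeasureTheory

theorem integral_le_integral_of_cdf_le {Ω Ω' : Type*} [MeasurableSpace Ω] [MeasurableSpace Ω']
    {μ : Measure Ω} {ν : Measure Ω'} [IsProbabilityMeasure μ] [IsProbabilityMeasure ν]
    {X : Ω → ℝ} {Y : Ω' → ℝ} {b : ℝ} (hX : Integrable X μ) (hY : Integrable Y ν)
    (hX_mem : ∀ᵐ ω ∂μ, X ω ∈ Icc 0 b) (hY_mem : ∀ᵐ ω ∂ν, Y ω ∈ Icc 0 b)
    (hcdf : ∀ t ∈ Ioc 0 b, ν.real {ω | Y ω ≤ t} ≤ μ.real {ω | X ω ≤ t}) :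
    ∫ ω, X ω ∂μ ≤ ∫ ω, Y ω ∂ν := by
  rw [hX.integral_eq_integral_Ioc_meas_lt (hX_mem.mono fun _ h => h.1)
      (hX_mem.mono fun _ h => h.2),
    hY.integral_eq_integral_Ioc_meas_lt (hY_mem.mono fun _ h => h.1)
      (hY_mem.mono fun _ h => h.2)]
  refine setIntegral_mono_on (integrableOn_measureReal_lt 0 b) (integrableOn_measureReal_lt 0 b)
    measurableSet_Ioc fun t ht => ?_
  rw [probReal_lt_eq_one_sub hX.aemeasurable, probReal_lt_eq_one_sub hY.aemeasurable]
  linarith [hcdf t ht]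

theorem sensitivity_stochastic_dominance_general {Ω : Type*} [MeasurableSpace Ω]
    (μ : Measure Ω) [IsProbabilityMeasure μ]
    (yt : ℝ)
    (r₁ r₂ : ℝ → ℝ)
    (hord : ∀ u ∈ Set.Icc 0 yt, r₂ u ≤ r₁ u)
    (hint₁ : IntervalIntegrable r₁ MeasureTheory.volume 0 yt)
    (hint₂ : IntervalIntegrable r₂ MeasureTheory.volume 0 yt)
    (F₁ F₂ : ℝ → ℝ)
    (hF₁ : ∀ y ∈ Set.Icc 0 yt, F₁ y = Real.exp (-∫ u in y..yt, r₁ u))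
    (hF₂ : ∀ y ∈ Set.Icc 0 yt, F₂ y = Real.exp (-∫ u in y..yt, r₂ u))
    (Y₁ Y₂ : Ω → ℝ)
    (hY₁ : Integrable Y₁ μ) (hY₂ : Integrable Y₂ μ)
    (hrange₁ : ∀ᵐ ω ∂μ, Y₁ ω ∈ Set.Icc 0 yt)
    (hrange₂ : ∀ᵐ ω ∂μ, Y₂ ω ∈ Set.Icc 0 yt)
    (hcdf₁ : ∀ y ∈ Set.Icc 0 yt, (μ {ω | Y₁ ω ≤ y}).toReal = F₁ y)
    (hcdf₂ : ∀ y ∈ Set.Icc 0 yt, (μ {ω | Y₂ ω ≤ y}).toReal = F₂ y) :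
    (∀ y ∈ Set.Icc 0 yt, F₁ y ≤ F₂ y) ∧
    (∀ ystar ∈ Set.Icc 0 yt, 1 - F₂ ystar ≤ 1 - F₁ ystar) ∧
    (∫ ω, Y₂ ω ∂μ) ≤ (∫ ω, Y₁ ω ∂μ) ∧
    yt - (∫ ω, Y₁ ω ∂μ) ≤ yt - (∫ ω, Y₂ ω ∂μ) := by
  have hF : ∀ y ∈ Icc 0 yt, F₁ y ≤ F₂ y := fun y hy => by
    rw [hF₁ y hy, hF₂ y hy]
    exact exp_neg_integral_le_exp_neg_integral hy hint₁ hint₂ hord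
  have hmean : ∫ ω, Y₂ ω ∂μ ≤ ∫ ω, Y₁ ω ∂μ :=
    integral_le_integral_of_cdf_le hY₂ hY₁ hrange₂ hrange₁ fun t ht => by
      have ht' := Ioc_subset_Icc_self ht
      rw [measureReal_def, measureReal_def, hcdf₁ t ht', hcdf₂ t ht']
      exact hF t ht'
  exact ⟨hF, fun y hy => by linarith [hF y hy], hmean, by linarith⟩

/-- higher sensitivity yields stochastic dominance: if the
nonnegative integrable sensitivity rates satisfy `r₁ ≥ r₂` pointwise on `[0, yt]`,
then the corresponding estimator CDFs satisfy `F₁ ≤ F₂` pointwise on `[0, yt]`;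
consequently for every threshold `ystar ∈ [0, yt]` the detection likelihood under
`r₁` is at least that under `r₂` (`1 - F₂ ystar ≤ 1 - F₁ ystar`), and the expected
estimator under `r₁` is at least that under `r₂` (`E[Y₂] ≤ E[Y₁]`), so the bias
magnitude is smaller under `r₁` (`yt - E[Y₁] ≤ yt - E[Y₂]`). -/
theorem sensitivity_stochastic_dominance {Ω : Type*} [MeasurableSpace Ω]
    (μ : Measure Ω) [IsProbabilityMeasure μ]
    (yt : ℝ) (hyt : 0 < yt)
    (r₁ r₂ : ℝ → ℝ)
    (hr₁ : ∀ u ∈ Set.Icc 0 yt, 0 ≤ r₁ u)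
    (hr₂ : ∀ u ∈ Set.Icc 0 yt, 0 ≤ r₂ u)
    (hord : ∀ u ∈ Set.Icc 0 yt, r₂ u ≤ r₁ u)
    (hint₁ : IntervalIntegrable r₁ MeasureTheory.volume 0 yt)
    (hint₂ : IntervalIntegrable r₂ MeasureTheory.volume 0 yt)
    (F₁ F₂ : ℝ → ℝ)
    (hF₁ : ∀ y ∈ Set.Icc 0 yt, F₁ y = Real.exp (-∫ u in y..yt, r₁ u))
    (hF₂ : ∀ y ∈ Set.Icc 0 yt, F₂ y = Real.exp (-∫ u in y..yt, r₂ u))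
    (Y₁ Y₂ : Ω → ℝ)
    (hmeas₁ : Measurable Y₁) (hmeas₂ : Measurable Y₂)
    (hY₁ : Integrable Y₁ μ) (hY₂ : Integrable Y₂ μ)
    (hrange₁ : ∀ᵐ ω ∂μ, Y₁ ω ∈ Set.Icc 0 yt)
    (hrange₂ : ∀ᵐ ω ∂μ, Y₂ ω ∈ Set.Icc 0 yt)
    (hcdf₁ : ∀ y ∈ Set.Icc 0 yt, (μ {ω | Y₁ ω ≤ y}).toReal = F₁ y)
    (hcdf₂ : ∀ y ∈ Set.Icc 0 yt, (μ {ω | Y₂ ω ≤ y}).toReal = F₂ y) :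
    (∀ y ∈ Set.Icc 0 yt, F₁ y ≤ F₂ y) ∧
    (∀ ystar ∈ Set.Icc 0 yt, 1 - F₂ ystar ≤ 1 - F₁ ystar) ∧
    (∫ ω, Y₂ ω ∂μ) ≤ (∫ ω, Y₁ ω ∂μ) ∧
    yt - (∫ ω, Y₁ ω ∂μ) ≤ yt - (∫ ω, Y₂ ω ∂μ) :=
  sensitivity_stochastic_dominance_general μ yt r₁ r₂ hord hint₁ hint₂ F₁ F₂ hF₁ hF₂ Y₁ Y₂ hY₁ hY₂
    hrange₁ hrange₂ hcdf₁ hcdf₂
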